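/- Let (X, Y, A) be jointly distributed with Y, A ∈ {0,1}, and let Ŷ = h(f(X)) ∈ {0,1} for a feature map f and classifier h. For each a ∈ {0,1}, let D_a^Y be the conditional distribution of Y given A = a and D_a^{h∘f} the conditional distribution of Ŷ given A = a. Then d_JS(D_a^Y, D_a^{h∘f}) ≤ √(Err_a(h ∘ f)), where Err_a(h ∘ f) := E[ |Y − h(f(X))| | A = a ]. -/

import Mathlib

open MeasureTheory ProbabilityTheory
open scoped ENNReal

/-- Kullback–Leibler divergence (base-2 logarithm) between two mass functions,
with the usual conventions `0 log 0 = 0`. -/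
noncomputable def klFun {α : Type*} (P Q : α → ℝ≥0∞) : ℝ :=
  ∑' a, (P a).toReal * Real.logb 2 ((P a).toReal / (Q a).toReal)

/-- Jensen–Shannon divergence (base-2 logarithm):
`D_JS(P, Q) = (1/2) D_KL(P ‖ M) + (1/2) D_KL(Q ‖ M)` where `M = (P + Q)/2`. -/
noncomputable def jsFun {α : Type*} (P Q : α → ℝ≥0∞) : ℝ :=
  (klFun P (fun a => (P a + Q a) / 2) + klFun Q (fun a => (P a + Q a) / 2)) / 2

/-!
Jensen–Shannon divergence is bounded by total variation, atom by atom: with `s = q / (p + q) ≤ 1/2`,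
`p log₂ (2p / (p + q)) + q log₂ (2q / (p + q)) = (p + q) (1 - H₂ s)`, and concavity of the binary
entropy `H₂` together with `H₂ 0 = 0`, `H₂ (1/2) = 1` gives `H₂ s ≥ 2 s`, so the atom contributes at
most `p - q`. Total variation between the conditional laws of `Y` and `Ŷ` is in turn at most the
conditional probability of `Y ≠ Ŷ`, which is `Err_a`.
-/

open scoped symmDiff

section
open Real

lemma two_mul_mul_log_two_le_binEntropy {s : ℝ} (hs₀ : 0 ≤ s) (hs : s ≤ 2⁻¹) :
    2 * s * log 2 ≤ binEntropy s := by
  have h := strictConcave_binEntropy.concaveOn.2 (Set.left_mem_Icc.2 zero_le_one)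
    (⟨by norm_num, by norm_num⟩ : (2⁻¹ : ℝ) ∈ Set.Icc 0 1)
    (by linarith : 0 ≤ 1 - 2 * s) (by linarith : 0 ≤ 2 * s) (by ring)
  simpa [show (2 : ℝ) * s * 2⁻¹ = s by ring] using h

lemma mul_log_two_mul (x : ℝ) : x * log (2 * x) = x * log 2 - negMulLog x := by
  rcases eq_or_ne x 0 with rfl | hx
  · simp
  · rw [log_mul two_ne_zero hx, negMulLog]; ring

lemma one_sub_mul_log_add_mul_log_le {s : ℝ} (hs₀ : 0 ≤ s) (hs : s ≤ 2⁻¹) :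
    (1 - s) * log (2 * (1 - s)) + s * log (2 * s) ≤ (1 - 2 * s) * log 2 := by
  have h := two_mul_mul_log_two_le_binEntropy hs₀ hs
  rw [binEntropy_eq_negMulLog_add_negMulLog_one_sub] at h
  rw [mul_log_two_mul, mul_log_two_mul]
  linarith

lemma mul_logb_div_add_mul_logb_div_le_abs_sub {p q : ℝ} (hp : 0 ≤ p) (hq : 0 ≤ q) :
    p * logb 2 (p / ((p + q) / 2)) + q * logb 2 (q / ((p + q) / 2)) ≤ |p - q| := by
  wlog hqp : q ≤ p generalizing p q
  · simpa only [add_comm, add_comm q p, abs_sub_comm] using this hq hp (by linarith)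
  rcases (add_nonneg hp hq).eq_or_lt with ht | ht
  · obtain ⟨rfl, rfl⟩ : p = 0 ∧ q = 0 := ⟨by linarith, by linarith⟩
    simp
  obtain ⟨s, hs⟩ : ∃ s, s = q / (p + q) := ⟨_, rfl⟩
  have hsp : p / ((p + q) / 2) = 2 * (1 - s) := by rw [hs]; field_simp; ring
  have hsq : q / ((p + q) / 2) = 2 * s := by rw [hs]; field_simp
  have hqs : q = (p + q) * s := by rw [hs]; field_simp
  have hs₀ : 0 ≤ s := by rw [hs]; positivity
  have hs₁ : s ≤ 2⁻¹ := by rw [hs, div_le_iff₀ ht]; linarith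
  have key := mul_le_mul_of_nonneg_left (one_sub_mul_log_add_mul_log_le hs₀ hs₁) ht.le
  rw [abs_of_nonneg (sub_nonneg.2 hqp), hsp, hsq, logb, logb, mul_div_assoc', mul_div_assoc',
    ← add_div, div_le_iff₀ (log_pos one_lt_two)]
  linear_combination key + (log (2 * s) - log (2 * (1 - s)) + 2 * log 2) * hqs

end

lemma jsFun_le_sum_abs_sub_div_two {α : Type*} [Fintype α] {P Q : α → ℝ≥0∞} (hP : ∀ a, P a ≠ ∞)
    (hQ : ∀ a, Q a ≠ ∞) : jsFun P Q ≤ (∑ a, |(P a).toReal - (Q a).toReal|) / 2 := by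
  have hM : ∀ a, ((P a + Q a) / 2).toReal = ((P a).toReal + (Q a).toReal) / 2 := fun a => by
    rw [ENNReal.toReal_div, ENNReal.toReal_add (hP a) (hQ a), ENNReal.toReal_ofNat]
  rw [jsFun, klFun, klFun, tsum_fintype, tsum_fintype, ← Finset.sum_add_distrib]
  gcongr with a
  rw [hM]
  exact mul_logb_div_add_mul_logb_div_le_abs_sub ENNReal.toReal_nonneg ENNReal.toReal_nonneg

lemma setOf_eq_symmDiff_setOf_eq {Ω : Type*} (Y Z : Ω → Bool) (b : Bool) :
    {ω | Y ω = b} ∆ {ω | Z ω = b} = {ω | Y ω ≠ Z ω} := by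
  ext ω
  simp only [Set.mem_symmDiff, Set.mem_ofPred_eq]
  cases b <;> cases Y ω <;> cases Z ω <;> decide

lemma integral_abs_sub_ite_eq_measureReal_ne {Ω : Type*} [MeasurableSpace Ω] {ν : Measure Ω}
    {Y Z : Ω → Bool} (hY : Measurable Y) (hZ : Measurable Z) :
    ∫ ω, |(if Y ω then (1 : ℝ) else 0) - (if Z ω then (1 : ℝ) else 0)| ∂ν =
      ν.real {ω | Y ω ≠ Z ω} := by
  have hne : MeasurableSet {ω | Y ω ≠ Z ω} := (measurableSet_eq_fun hY hZ).compl
  rw [← integral_indicator_one hne]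
  congr 1 with ω
  cases hy : Y ω <;> cases hz : Z ω <;> simp [hy, hz]

theorem jsDist_le_sqrt_err_general
    {Ω 𝒳 𝒵 : Type*} [MeasurableSpace Ω]
    (μ : Measure Ω)
    (X : Ω → 𝒳) (Y A : Ω → Bool) (f : 𝒳 → 𝒵) (h : 𝒵 → Bool)
    (hY : Measurable Y)
    (hhfX : Measurable (fun ω => h (f (X ω)))) :
    ∀ a : Bool,
      Real.sqrt (jsFun
          (fun b => (ProbabilityTheory.cond μ {ω | A ω = a}) {ω | Y ω = b})
          (fun b => (ProbabilityTheory.cond μ {ω | A ω = a}) {ω | h (f (X ω)) = b}))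
        ≤ Real.sqrt (∫ ω, |(if Y ω then (1:ℝ) else 0) -
            (if h (f (X ω)) then (1:ℝ) else 0)| ∂(ProbabilityTheory.cond μ {ω' | A ω' = a})) := by
  intro a
  set ν := cond μ {ω | A ω = a}
  apply Real.sqrt_le_sqrt
  calc _ ≤ (∑ b, |ν.real {ω | Y ω = b} - ν.real {ω | h (f (X ω)) = b}|) / 2 :=
        jsFun_le_sum_abs_sub_div_two (fun _ => measure_ne_top _ _) (fun _ => measure_ne_top _ _)
    _ ≤ (∑ _b : Bool, ν.real {ω | Y ω ≠ h (f (X ω))}) / 2 := by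
        gcongr with b
        rw [← setOf_eq_symmDiff_setOf_eq]
        exact abs_measureReal_sub_le_measureReal_symmDiff
          (hY (measurableSet_singleton b)).nullMeasurableSet
          (hhfX (measurableSet_singleton b)).nullMeasurableSet
    _ = ν.real {ω | Y ω ≠ h (f (X ω))} := by simp
    _ = _ := (integral_abs_sub_ite_eq_measureReal_ne hY hhfX).symm

/-- for each `a ∈ {0,1}`, the JS distance between the conditional
distribution `D_a^Y` of `Y` given `A = a` and the conditional distribution
`D_a^{h∘f}` of `Ŷ = h(f(X))` given `A = a` satisfies
`d_JS(D_a^Y, D_a^{h∘f}) ≤ √(Err_a(h ∘ f))`, where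
`Err_a(h ∘ f) = E[|Y - h(f(X))| | A = a]`. -/
theorem jsDist_le_sqrt_err
    {Ω 𝒳 𝒵 : Type*} [MeasurableSpace Ω]
    (μ : Measure Ω) [IsProbabilityMeasure μ]
    (X : Ω → 𝒳) (Y A : Ω → Bool) (f : 𝒳 → 𝒵) (h : 𝒵 → Bool)
    (hY : Measurable Y) (hA : Measurable A)
    (hhfX : Measurable (fun ω => h (f (X ω))))
    (hA0 : μ {ω | A ω = false} ≠ 0) (hA1 : μ {ω | A ω = true} ≠ 0) :
    ∀ a : Bool,
      Real.sqrt (jsFun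
          (fun b => (ProbabilityTheory.cond μ {ω | A ω = a}) {ω | Y ω = b})
          (fun b => (ProbabilityTheory.cond μ {ω | A ω = a}) {ω | h (f (X ω)) = b}))
        ≤ Real.sqrt (∫ ω, |(if Y ω then (1:ℝ) else 0) -
            (if h (f (X ω)) then (1:ℝ) else 0)| ∂(ProbabilityTheory.cond μ {ω' | A ω' = a})) :=
  jsDist_le_sqrt_err_general μ X Y A f h hY hhfX
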